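/- arXiv:1903.09200 — 2 statements merged into one kernel-verified Lean document; each statement's English description precedes it below -/
import Mathlib

section
/- Let λ, λ' be vectors in ℓ²(ℕ) and suppose there exists j₀ ∈ ℕ with λ(j) = λ'(j) for all j < j₀ and λ(j₀) > λ'(j₀) ≥ 0, where both λ and λ' are nonincreasing and nonnegative. If (V_j) are i.i.d. real random variables with a moment generating function finite exactly on an open interval (-t₀, t₀) with t₀ ∈ (0,∞), and diverging as t → t₀, then the random variables ∑_j λ(j) V_j and ∑_j λ'(j) V_j (series converging in L²) have different distributions, provided the corresponding truncated series are independent of the initial common part. -/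
/-!
Suppose the two mixtures had the same law. The common head `∑_{j<j₀} λ(j) V_j` is independent
of both tails and has a positive moment generating function near `0`, so it can be cancelled:
the mgfs of the tails `T = ∑_{j≥j₀} λ(j) V_j` and `T' = ∑_{j≥j₀} λ'(j) V_j` agree near `0`.

Both mgfs are finite on `(-a, a)`, `a = t₀ / λ(j₀)`, since all tail coefficients are at most
`λ(j₀)`: by Fatou, `E e^{tT} ≤ ∏_j E e^{t λ(j) V}`, and `E e^{sV} ≤ exp(s E V + K s²)` on compact
subintervals of `(-t₀, t₀)`; the linear terms are summable unless `λ ∉ ℓ¹`, and in that case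
a.s. convergence of the series forces `E V = 0`. Being analytic on `(-a, a)`, the two mgfs agree
there. But `T` contains the summand `λ(j₀) V_{j₀}`, so `E e^{tT} ≥ κ E e^{t λ(j₀) V} → ∞` as
`t ↑ a`, while the coefficients of `T'` are at most `λ'(j₀) < λ(j₀)`, so `E e^{tT'}` stays bounded
on `[0, a]`.
-/

open MeasureTheory ProbabilityTheory Filter Real Set Topology

lemma Summable.ite_zero {β α : Type*} [UniformSpace α] [AddCommGroup α] [IsUniformAddGroup α]
    [CompleteSpace α] {f : β → α} (hf : Summable f) (p : β → Prop) [DecidablePred p] :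
    Summable fun j => if p j then f j else 0 :=
  (hf.indicator {j | p j}).congr fun j => by simp [Set.indicator_apply]

lemma Antitone.ite_le {c : ℕ → ℝ} (hc : Antitone c) {n : ℕ} (hcn : 0 ≤ c n) (j : ℕ) :
    (if n ≤ j then c j else 0) ≤ c n := by
  split_ifs with h; exacts [hc h, hcn]

lemma exp_le_one_add_add_sq_mul_exp_abs (x : ℝ) : exp x ≤ 1 + x + x ^ 2 * exp |x| := by
  rcases le_or_gt |x| 1 with hx | hx
  · nlinarith [(abs_le.1 (abs_exp_sub_one_sub_id_le hx)).2, one_le_exp (abs_nonneg x), sq_nonneg x]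
  · have hx2 : 1 ≤ x ^ 2 := by nlinarith [sq_abs x]
    have hxabs : exp x ≤ exp |x| := exp_le_exp.2 (le_abs_self x)
    rcases abs_cases x with ⟨h, _⟩ | ⟨h, _⟩ <;> rw [h] at hx hxabs ⊢
    · nlinarith [exp_pos x]
    · nlinarith [add_one_le_exp (-x), exp_pos (-x)]

lemma exp_mul_le_of_abs_le {r s : ℝ} (hs : |s| ≤ r) (x : ℝ) :
    exp (s * x) ≤ 1 + s * x + s ^ 2 * (x ^ 2 * exp (r * x) + x ^ 2 * exp (-r * x)) := by
  have hcosh : exp |s * x| ≤ exp (r * x) + exp (-r * x) :=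
    calc exp |s * x| ≤ exp |r * x| := exp_le_exp.2 <| by
          rw [abs_mul, abs_mul]
          exact mul_le_mul_of_nonneg_right (hs.trans (le_abs_self r)) (abs_nonneg x)
      _ ≤ exp (r * x) + exp (-r * x) := by simpa using exp_abs_le (r * x)
  calc exp (s * x) ≤ 1 + s * x + (s * x) ^ 2 * exp |s * x| := exp_le_one_add_add_sq_mul_exp_abs _
    _ ≤ 1 + s * x + (s * x) ^ 2 * (exp (r * x) + exp (-r * x)) := by gcongr
    _ = _ := by ring

section MGF

variable {Ω : Type*} [MeasurableSpace Ω] {P : Measure Ω} {X : Ω → ℝ} {t₀ : ℝ}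

lemma Ioo_subset_interior_integrableExpSet
    (hfin : ∀ t : ℝ, |t| < t₀ → Integrable (fun ω => exp (t * X ω)) P) :
    Ioo (-t₀) t₀ ⊆ interior (integrableExpSet X P) :=
  interior_maximal (fun t ht => hfin t (abs_lt.2 ht)) isOpen_Ioo

lemma exists_mgf_le_exp_mul_add_sq [IsProbabilityMeasure P] {r : ℝ}
    (hfin : ∀ t : ℝ, |t| < t₀ → Integrable (fun ω => exp (t * X ω)) P) (hr0 : 0 ≤ r)
    (hr : r < t₀) :
    ∃ K, 0 ≤ K ∧ ∀ s, |s| ≤ r → mgf X P s ≤ exp (s * P[X] + K * s ^ 2) := by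
  have hint := Ioo_subset_interior_integrableExpSet hfin
  set W : Ω → ℝ := fun ω => X ω ^ 2 * exp (r * X ω) + X ω ^ 2 * exp (-r * X ω)
  have hW : Integrable W P :=
    (integrable_pow_mul_exp_of_mem_interior_integrableExpSet (hint ⟨by linarith, hr⟩) 2).add
      (integrable_pow_mul_exp_of_mem_interior_integrableExpSet (hint ⟨by linarith, by linarith⟩) 2)
  have hX : Integrable X P :=
    integrable_of_mem_interior_integrableExpSet (hint ⟨by linarith, by linarith⟩)
  refine ⟨P[W], integral_nonneg fun ω => by positivity, fun s hs => ?_⟩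
  have h1 : Integrable (fun ω => 1 + s * X ω) P := (integrable_const 1).add (hX.const_mul s)
  calc mgf X P s ≤ ∫ ω, (1 + s * X ω + s ^ 2 * W ω) ∂P :=
        integral_mono (hfin s (hs.trans_lt hr)) (h1.add (hW.const_mul _))
          fun ω => exp_mul_le_of_abs_le hs (X ω)
    _ = 1 + s * P[X] + P[W] * s ^ 2 := by
        rw [integral_add h1 (hW.const_mul _), integral_add (integrable_const 1) (hX.const_mul s),
          integral_const_mul, integral_const_mul]
        simp only [integral_const, probReal_univ, smul_eq_mul, mul_one]
        ring
    _ ≤ exp (s * P[X] + P[W] * s ^ 2) := by linarith [add_one_le_exp (s * P[X] + P[W] * s ^ 2)]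

lemma prod_mgf_mul_le {μ K r t : ℝ} {c : ℕ → ℝ} (hK0 : 0 ≤ K)
    (hK : ∀ s, |s| ≤ r → mgf X P s ≤ exp (s * μ + K * s ^ 2)) (hc : Summable fun j => c j ^ 2)
    (htc : ∀ j, |t * c j| ≤ r) (N : ℕ) :
    ∏ j ∈ Finset.range N, mgf X P (t * c j)
      ≤ exp (t * μ * ∑ j ∈ Finset.range N, c j + K * t ^ 2 * ∑' j, c j ^ 2) :=
  calc ∏ j ∈ Finset.range N, mgf X P (t * c j)
      ≤ ∏ j ∈ Finset.range N, exp (t * c j * μ + K * (t * c j) ^ 2) :=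
        Finset.prod_le_prod (fun j _ => mgf_nonneg) fun j _ => hK _ (htc j)
    _ = exp (t * μ * ∑ j ∈ Finset.range N, c j + K * t ^ 2 * ∑ j ∈ Finset.range N, c j ^ 2) := by
        rw [← exp_sum, Finset.mul_sum, Finset.mul_sum, ← Finset.sum_add_distrib]
        exact congrArg exp (Finset.sum_congr rfl fun j _ => by ring)
    _ ≤ exp (t * μ * ∑ j ∈ Finset.range N, c j + K * t ^ 2 * ∑' j, c j ^ 2) := by
        gcongr
        exact hc.sum_le_tsum _ fun j _ => sq_nonneg _

lemma exists_pos_le_mgf [IsProbabilityMeasure P] (a : ℝ) :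
    ∃ κ > 0, ∀ t, 0 ≤ t → t ≤ a → Integrable (fun ω => exp (t * X ω)) P → κ ≤ mgf X P t := by
  obtain ⟨K, hK⟩ : ∃ K : ℕ, 0 < P {ω | -(K : ℝ) ≤ X ω} := by
    have hcover : ⋃ K : ℕ, {ω | -(K : ℝ) ≤ X ω} = univ :=
      iUnion_eq_univ_iff.2 fun ω => (exists_nat_ge (-X ω)).imp fun K hK =>
        show -(K : ℝ) ≤ X ω by linarith
    exact exists_measure_pos_of_not_measure_iUnion_null (by simp [hcover])
  refine ⟨exp (-(a * K)) * P.real {ω | -(K : ℝ) ≤ X ω},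
    mul_pos (exp_pos _) (ENNReal.toReal_pos hK.ne' (measure_ne_top _ _)), fun t ht0 hta hint => ?_⟩
  calc exp (-(a * K)) * P.real {ω | -(K : ℝ) ≤ X ω}
      ≤ exp (-(a * K)) * P.real {ω | exp (-(a * K)) ≤ exp (t * X ω)} := by
        refine mul_le_mul_of_nonneg_left (measureReal_mono fun ω hω => exp_le_exp.2 ?_)
          (exp_pos _).le
        have : -(K : ℝ) ≤ X ω := hω
        nlinarith [mul_le_mul_of_nonneg_right hta (Nat.cast_nonneg K)]
    _ ≤ mgf X P t := mul_meas_ge_le_integral_of_nonneg (ae_of_all _ fun ω => (exp_pos _).le) hint _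

lemma mgf_eventuallyEq_of_map_add_eq [IsProbabilityMeasure P] {A T T' : Ω → ℝ}
    (hA : AEMeasurable A P) (hT : AEMeasurable T P) (hT' : AEMeasurable T' P)
    (hind : IndepFun A T P) (hind' : IndepFun A T' P) (hlaw : P.map (A + T) = P.map (A + T'))
    (hAint : ∀ᶠ t in 𝓝 0, Integrable (fun ω => exp (t * A ω)) P) :
    mgf T P =ᶠ[𝓝 0] mgf T' P := by
  have hmgf : mgf (A + T) P = mgf (A + T') P := mgf_congr_identDistrib ⟨hA.add hT, hA.add hT', hlaw⟩
  filter_upwards [hAint] with t ht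
  refine mul_left_cancel₀ (mgf_pos ht).ne' ?_
  rw [← hind.mgf_add' hA.aestronglyMeasurable hT.aestronglyMeasurable,
    ← hind'.mgf_add' hA.aestronglyMeasurable hT'.aestronglyMeasurable, hmgf]

end MGF

section Mixture

variable {Ω : Type*} {V : ℕ → Ω → ℝ} {c : ℕ → ℝ}

-- `∑'` is `0` where the series diverges; every use below assumes a.s. summability.
noncomputable def mixture (V : ℕ → Ω → ℝ) (c : ℕ → ℝ) (ω : Ω) : ℝ := ∑' j, c j * V j ω

lemma mixture_ite (p : ℕ → Prop) [DecidablePred p] :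
    mixture V (fun j => if p j then c j else 0)
      = fun ω => ∑' j, if p j then c j * V j ω else 0 := by
  funext ω; simp only [mixture, ite_zero_mul]

variable [MeasurableSpace Ω] {P : Measure Ω}

structure IsIIDSeq (V : ℕ → Ω → ℝ) (P : Measure Ω) : Prop where
  measurable : ∀ j, Measurable (V j)
  indep : iIndepFun V P
  identDistrib : ∀ j, IdentDistrib (V j) (V 0) P P

structure IsMixtureCoeff (V : ℕ → Ω → ℝ) (P : Measure Ω) (c : ℕ → ℝ) : Prop where
  nonneg : ∀ j, 0 ≤ c j
  summable_sq : Summable fun j => c j ^ 2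
  ae_summable : ∀ᵐ ω ∂P, Summable fun j => c j * V j ω

lemma IsMixtureCoeff.ite (hc : IsMixtureCoeff V P c) (p : ℕ → Prop) [DecidablePred p] :
    IsMixtureCoeff V P fun j => if p j then c j else 0 where
  nonneg j := by split_ifs; exacts [hc.nonneg j, le_rfl]
  summable_sq := by simpa [ite_pow] using Summable.ite_zero hc.summable_sq p
  ae_summable := hc.ae_summable.mono fun ω h => by
    simpa [ite_zero_mul] using Summable.ite_zero h p

lemma IsIIDSeq.measurable_mixture (hV : IsIIDSeq V P) (c : ℕ → ℝ) : Measurable (mixture V c) :=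
  Measurable.tsum fun j => (hV.measurable j).const_mul (c j)

lemma mixture_ae_eq_add (hc : ∀ᵐ ω ∂P, Summable fun j => c j * V j ω) {p q : ℕ → Prop}
    [DecidablePred p] [DecidablePred q] (hpq : ∀ j, p j ↔ ¬ q j) :
    mixture V c =ᵐ[P] mixture V (fun j => if p j then c j else 0)
      + mixture V (fun j => if q j then c j else 0) := by
  filter_upwards [hc] with ω hω
  simp only [mixture, Pi.add_apply, ite_zero_mul]
  rw [← (Summable.ite_zero hω p).tsum_add (Summable.ite_zero hω q)]
  exact tsum_congr fun j => by by_cases hq : q j <;> simp [hq, hpq j]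

lemma IsIIDSeq.iIndepFun_mul (hV : IsIIDSeq V P) (c : ℕ → ℝ) :
    iIndepFun (fun j ω => c j * V j ω) P :=
  hV.indep.comp (fun j x => c j * x) fun j => measurable_const_mul (c j)

lemma IsIIDSeq.mgf_sum_mul (hV : IsIIDSeq V P) (c : ℕ → ℝ) (t : ℝ) (N : ℕ) :
    mgf (fun ω => ∑ j ∈ Finset.range N, c j * V j ω) P t
      = ∏ j ∈ Finset.range N, mgf (V 0) P (t * c j) := by
  have h := (hV.iIndepFun_mul c).mgf_sum (fun j => (hV.measurable j).const_mul (c j))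
    (Finset.range N) (t := t)
  simp only [Finset.sum_fn] at h
  rw [h]
  refine Finset.prod_congr rfl fun j _ => ?_
  rw [mgf_const_mul, mgf_congr_identDistrib (hV.identDistrib j), mul_comm]

lemma IsIIDSeq.integrable_exp_mul_sum [IsProbabilityMeasure P] (hV : IsIIDSeq V P) {t : ℝ}
    (hint : ∀ j, Integrable (fun ω => exp (t * c j * V 0 ω)) P) (N : ℕ) :
    Integrable (fun ω => exp (t * ∑ j ∈ Finset.range N, c j * V j ω)) P := by
  have h := (hV.iIndepFun_mul c).integrable_exp_mul_sum
    (fun j => (hV.measurable j).const_mul (c j)) (s := Finset.range N) (t := t) fun j _ => by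
      have := ((hV.identDistrib j).comp (measurable_exp.comp
        (measurable_const_mul (t * c j)))).integrable_iff.2 (hint j)
      simpa only [Function.comp_def, mul_assoc] using this
  simpa only [Finset.sum_fn] using h

lemma IsIIDSeq.lintegral_exp_mul_mixture_le [IsProbabilityMeasure P] (hV : IsIIDSeq V P) {t : ℝ}
    (hconv : ∀ᵐ ω ∂P, Summable fun j => c j * V j ω)
    (hint : ∀ j, Integrable (fun ω => exp (t * c j * V 0 ω)) P) :
    ∫⁻ ω, ENNReal.ofReal (exp (t * mixture V c ω)) ∂P
      ≤ liminf (fun N => ENNReal.ofReal (∏ j ∈ Finset.range N, mgf (V 0) P (t * c j))) atTop := by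
  set S : ℕ → Ω → ℝ := fun N ω => ∑ j ∈ Finset.range N, c j * V j ω
  have hcont : Continuous fun x => ENNReal.ofReal (exp (t * x)) :=
    ENNReal.continuous_ofReal.comp (by fun_prop)
  calc ∫⁻ ω, ENNReal.ofReal (exp (t * mixture V c ω)) ∂P
      = ∫⁻ ω, liminf (fun N => ENNReal.ofReal (exp (t * S N ω))) atTop ∂P := by
        refine lintegral_congr_ae ?_
        filter_upwards [hconv] with ω hω
        exact ((hcont.tendsto _).comp hω.hasSum.tendsto_sum_nat).liminf_eq.symm
    _ ≤ liminf (fun N => ∫⁻ ω, ENNReal.ofReal (exp (t * S N ω)) ∂P) atTop :=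
        lintegral_liminf_le fun N => hcont.measurable.comp
          (Finset.measurable_sum _ fun j _ => (hV.measurable j).const_mul (c j))
    _ = _ := by
        congr with N
        rw [← ofReal_integral_eq_lintegral_ofReal (hV.integrable_exp_mul_sum hint N)
          (ae_of_all _ fun ω => (exp_pos _).le)]
        exact congrArg ENNReal.ofReal (hV.mgf_sum_mul c t N)

lemma IsIIDSeq.integrable_exp_mul_mixture_of_prod_le [IsProbabilityMeasure P]
    (hV : IsIIDSeq V P) {t M : ℝ} (hconv : ∀ᵐ ω ∂P, Summable fun j => c j * V j ω)
    (hint : ∀ j, Integrable (fun ω => exp (t * c j * V 0 ω)) P)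
    (hM : ∀ N, ∏ j ∈ Finset.range N, mgf (V 0) P (t * c j) ≤ M) :
    Integrable (fun ω => exp (t * mixture V c ω)) P ∧ mgf (mixture V c) P t ≤ M := by
  have hM0 : 0 ≤ M := zero_le_one.trans (by simpa using hM 0)
  have hpos : 0 ≤ᵐ[P] fun ω => exp (t * mixture V c ω) := ae_of_all _ fun ω => (exp_pos _).le
  have hlin : ∫⁻ ω, ENNReal.ofReal (exp (t * mixture V c ω)) ∂P ≤ ENNReal.ofReal M :=
    (hV.lintegral_exp_mul_mixture_le hconv hint).trans <|
      (liminf_le_liminf (Eventually.of_forall fun N => ENNReal.ofReal_le_ofReal (hM N))).trans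
        (liminf_const _).le
  have hmeas := (((hV.measurable_mixture c).const_mul t).exp).aestronglyMeasurable (μ := P)
  refine ⟨⟨hmeas, (hasFiniteIntegral_iff_ofReal hpos).2 (hlin.trans_lt ENNReal.ofReal_lt_top)⟩, ?_⟩
  rw [mgf, integral_eq_lintegral_of_nonneg_ae hpos hmeas]
  exact ENNReal.toReal_le_of_le_ofReal hM0 hlin

lemma IsIIDSeq.integral_eq_zero_of_not_summable [IsProbabilityMeasure P] (hV : IsIIDSeq V P)
    {t₀ m : ℝ} (ht₀ : 0 < t₀)
    (hfin : ∀ t : ℝ, |t| < t₀ → Integrable (fun ω => exp (t * V 0 ω)) P)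
    (hc : IsMixtureCoeff V P c) (hcm : ∀ j, c j ≤ m) (hnc : ¬ Summable c) : P[V 0] = 0 := by
  by_contra hμ
  obtain ⟨K, hK0, hK⟩ := exists_mgf_le_exp_mul_add_sq hfin (r := t₀ / 2) (by positivity)
    (by linarith)
  have hm : 0 ≤ m := (hc.nonneg 0).trans (hcm 0)
  set τ := t₀ / 2 / (m + 1)
  have hτ : 0 < τ := by positivity
  -- the sign of `t` is chosen against the mean, so that the partial products tend to `0`
  obtain ⟨t, htμ, ht⟩ : ∃ t, t * P[V 0] = -(τ * |P[V 0]|) ∧ |t| = τ := by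
    rcases lt_or_gt_of_ne hμ with h | h
    · exact ⟨τ, by rw [abs_of_neg h]; ring, abs_of_pos hτ⟩
    · exact ⟨-τ, by rw [abs_of_pos h]; ring, by rw [abs_neg, abs_of_pos hτ]⟩
  have htc : ∀ j, |t * c j| ≤ t₀ / 2 := fun j => by
    rw [abs_mul, ht, abs_of_nonneg (hc.nonneg j)]
    calc τ * c j ≤ τ * (m + 1) := by gcongr; linarith [hcm j]
      _ = t₀ / 2 := div_mul_cancel₀ _ (by positivity)
  have hexp : Tendsto (fun N => exp (t * P[V 0] * ∑ j ∈ Finset.range N, c j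
      + K * t ^ 2 * ∑' j, c j ^ 2)) atTop (𝓝 0) := by
    rw [htμ]
    refine tendsto_exp_atBot.comp (Tendsto.atBot_add ?_ tendsto_const_nhds)
    exact ((not_summable_iff_tendsto_nat_atTop_of_nonneg hc.nonneg).1 hnc).const_mul_atTop_of_neg
      (by nlinarith [abs_pos.2 hμ])
  have hprod : Tendsto (fun N => ENNReal.ofReal (∏ j ∈ Finset.range N, mgf (V 0) P (t * c j)))
      atTop (𝓝 0) := by
    rw [← ENNReal.ofReal_zero]
    refine ENNReal.tendsto_ofReal (tendsto_of_tendsto_of_tendsto_of_le_of_le tendsto_const_nhds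
      hexp (fun N => Finset.prod_nonneg fun j _ => mgf_nonneg) ?_)
    exact prod_mgf_mul_le hK0 hK hc.summable_sq htc
  have hzero := (hV.lintegral_exp_mul_mixture_le hc.ae_summable
    fun j => hfin _ ((htc j).trans_lt (by linarith))).trans_eq hprod.liminf_eq
  refine (lintegral_pos_iff_support (ENNReal.measurable_ofReal.comp
    ((hV.measurable_mixture c).const_mul t).exp)).2 ?_ |>.not_ge hzero
  simp [Function.support, exp_pos]

lemma IsIIDSeq.exists_mgf_mixture_le [IsProbabilityMeasure P] (hV : IsIIDSeq V P) {t₀ m τ : ℝ}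
    (hfin : ∀ t : ℝ, |t| < t₀ → Integrable (fun ω => exp (t * V 0 ω)) P)
    (hc : IsMixtureCoeff V P c) (hcm : ∀ j, c j ≤ m) (hτ0 : 0 ≤ τ) (hτ : τ * m < t₀) :
    ∃ B, ∀ t, |t| ≤ τ →
      Integrable (fun ω => exp (t * mixture V c ω)) P ∧ mgf (mixture V c) P t ≤ B := by
  have hm : 0 ≤ m := (hc.nonneg 0).trans (hcm 0)
  obtain ⟨K, hK0, hK⟩ := exists_mgf_le_exp_mul_add_sq hfin (mul_nonneg hτ0 hm) hτ
  have hmean : Summable c ∨ P[V 0] = 0 := or_iff_not_imp_left.2 <|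
    hV.integral_eq_zero_of_not_summable ((mul_nonneg hτ0 hm).trans_lt hτ) hfin hc hcm
  -- if `c` is not summable the mean vanishes, so the linear term of the exponent stays bounded
  refine ⟨exp (τ * |P[V 0]| * ∑' j, c j + K * τ ^ 2 * ∑' j, c j ^ 2), fun t ht => ?_⟩
  have htc : ∀ j, |t * c j| ≤ τ * m := fun j => by
    rw [abs_mul, abs_of_nonneg (hc.nonneg j)]
    exact mul_le_mul ht (hcm j) (hc.nonneg j) hτ0
  refine hV.integrable_exp_mul_mixture_of_prod_le hc.ae_summable
    (fun j => hfin _ ((htc j).trans_lt hτ)) fun N =>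
      (prod_mgf_mul_le hK0 hK hc.summable_sq htc N).trans (exp_le_exp.2 (add_le_add ?_ ?_))
  · rcases hmean with hs | h0
    · calc t * P[V 0] * ∑ j ∈ Finset.range N, c j
          ≤ τ * |P[V 0]| * ∑ j ∈ Finset.range N, c j := by
            refine mul_le_mul_of_nonneg_right ?_ (Finset.sum_nonneg fun j _ => hc.nonneg j)
            exact (le_abs_self _).trans (by rw [abs_mul]; gcongr)
        _ ≤ τ * |P[V 0]| * ∑' j, c j := by
            gcongr
            exact hs.sum_le_tsum _ fun j _ => hc.nonneg j
    · simp [h0]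
  · have ht2 : t ^ 2 ≤ τ ^ 2 := by rw [← sq_abs]; gcongr
    have hQ : 0 ≤ ∑' j, c j ^ 2 := tsum_nonneg fun j => sq_nonneg _
    gcongr

lemma IsIIDSeq.indepFun_mixture (hV : IsIIDSeq V P) {n : ℕ} (hcn : c n = 0) :
    IndepFun (V n) (mixture V c) P := by
  set m : ℕ → MeasurableSpace Ω := fun i => MeasurableSpace.comap (V i) inferInstance
  have hVm : ∀ i, Measurable[m i] (V i) := fun i => comap_measurable (V i)
  have hI : Indep (⨆ i ∈ ({n} : Set ℕ), m i) (⨆ i ∈ ({n}ᶜ : Set ℕ), m i) P :=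
    indep_iSup_of_disjoint (fun i => (hV.measurable i).comap_le) hV.indep.iIndep
      disjoint_compl_right
  rw [IndepFun_iff_Indep]
  refine indep_of_indep_of_le_left (indep_of_indep_of_le_right hI ?_) ?_
  · have htail : Measurable[⨆ i ∈ ({n}ᶜ : Set ℕ), m i] (mixture V c) := by
      let _ : MeasurableSpace Ω := ⨆ i ∈ ({n}ᶜ : Set ℕ), m i
      refine Measurable.tsum fun j => ?_
      by_cases hj : j = n
      · simp only [hj, hcn, zero_mul]
        exact measurable_const
      · exact ((hVm j).mono (le_biSup m hj) le_rfl).const_mul (c j)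
    exact htail.comap_le
  · exact ((hVm n).mono (le_biSup m (mem_singleton n)) le_rfl).comap_le

lemma IsIIDSeq.tendsto_mgf_mixture_atTop [IsProbabilityMeasure P] (hV : IsIIDSeq V P)
    {t₀ : ℝ} (ht₀ : 0 < t₀)
    (hfin : ∀ t : ℝ, |t| < t₀ → Integrable (fun ω => exp (t * V 0 ω)) P)
    (hdiv : Tendsto (mgf (V 0) P) (𝓝[<] t₀) atTop) (hc : IsMixtureCoeff V P c) {n : ℕ} {m : ℝ}
    (hmax : ∀ j, c j ≤ m) (hcn : c n = m) (hm : 0 < m) :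
    Tendsto (mgf (mixture V c) P) (𝓝[<] (t₀ / m)) atTop := by
  subst hcn
  set e : ℕ → ℝ := fun j => if j ≠ n then c j else 0
  have hsplit : mixture V c =ᵐ[P] (fun ω => c n * V n ω) + mixture V e := by
    filter_upwards [mixture_ae_eq_add hc.ae_summable (p := (· = n)) fun j => not_not.symm] with ω hω
    rw [hω]
    simp [mixture, e]
  have hind : IndepFun (fun ω => c n * V n ω) (mixture V e) P :=
    (hV.indepFun_mixture (c := e) (by simp [e])).comp (measurable_const_mul (c n)) measurable_id
  have hmgf : ∀ t, mgf (mixture V c) P t = mgf (V 0) P (t * c n) * mgf (mixture V e) P t := by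
    intro t
    rw [mgf_congr hsplit, hind.mgf_add' ((hV.measurable n).const_mul _).aestronglyMeasurable
      (hV.measurable_mixture e).aestronglyMeasurable, mgf_const_mul,
      mgf_congr_identDistrib (hV.identDistrib n), mul_comm (c n)]
  obtain ⟨κ, hκ, hκle⟩ := exists_pos_le_mgf (P := P) (X := mixture V e) (t₀ / c n)
  have hscale : Tendsto (· * c n) (𝓝[<] (t₀ / c n)) (𝓝[<] t₀) := by
    refine tendsto_nhdsWithin_of_tendsto_nhds_of_eventually_within _ ?_ ?_
    · simpa [div_mul_cancel₀ _ hm.ne'] using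
        ((continuous_mul_const (c n)).tendsto (t₀ / c n)).mono_left nhdsWithin_le_nhds
    · exact eventually_nhdsWithin_of_forall fun t ht => (lt_div_iff₀ hm).1 ht
  refine tendsto_atTop_mono' _ ?_ ((hdiv.comp hscale).atTop_mul_const hκ)
  filter_upwards [Ioo_mem_nhdsLT (div_pos ht₀ hm)] with t ⟨ht0, ht⟩
  have hen : ∀ j, e j ≤ c n := fun j => by
    simp only [e]; split_ifs; exacts [hmax j, hm.le]
  obtain ⟨B, hB⟩ := hV.exists_mgf_mixture_le hfin (hc.ite _) hen ht0.le ((lt_div_iff₀ hm).1 ht)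
  rw [hmgf, Function.comp_apply]
  exact mul_le_mul_of_nonneg_left (hκle t ht0.le ht.le (hB t (abs_of_pos ht0).le).1) mgf_nonneg

lemma IsIIDSeq.Ioo_subset_interior_integrableExpSet_mixture [IsProbabilityMeasure P]
    (hV : IsIIDSeq V P) {t₀ m : ℝ}
    (hfin : ∀ t : ℝ, |t| < t₀ → Integrable (fun ω => exp (t * V 0 ω)) P)
    (hc : IsMixtureCoeff V P c) (hcm : ∀ j, c j ≤ m) (hm : 0 < m) :
    Ioo (-(t₀ / m)) (t₀ / m) ⊆ interior (integrableExpSet (mixture V c) P) :=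
  interior_maximal (fun t ht => ((hV.exists_mgf_mixture_le hfin hc hcm (abs_nonneg t)
    ((lt_div_iff₀ hm).1 (abs_lt.2 ht))).choose_spec t le_rfl).1) isOpen_Ioo

lemma IsIIDSeq.eventually_integrable_exp_mul_mixture [IsProbabilityMeasure P]
    (hV : IsIIDSeq V P) {t₀ m : ℝ} (ht₀ : 0 < t₀)
    (hfin : ∀ t : ℝ, |t| < t₀ → Integrable (fun ω => exp (t * V 0 ω)) P)
    (hc : IsMixtureCoeff V P c) (hcm : ∀ j, c j ≤ m) (hm : 0 < m) :
    ∀ᶠ t in 𝓝 0, Integrable (fun ω => exp (t * mixture V c ω)) P :=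
  have h0 : 0 < t₀ / m := div_pos ht₀ hm
  eventually_of_mem (Ioo_mem_nhds (neg_lt_zero.2 h0) h0) fun _ ht =>
    (interior_subset (hV.Ioo_subset_interior_integrableExpSet_mixture hfin hc hcm hm ht) :
      _ ∈ integrableExpSet (mixture V c) P)

lemma IsIIDSeq.mgf_tail_eventuallyEq [IsProbabilityMeasure P] (hV : IsIIDSeq V P) {t₀ m : ℝ}
    (ht₀ : 0 < t₀) (hfin : ∀ t : ℝ, |t| < t₀ → Integrable (fun ω => exp (t * V 0 ω)) P)
    {c' : ℕ → ℝ} (hc : IsMixtureCoeff V P c) (hc' : IsMixtureCoeff V P c') {n : ℕ}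
    (hagree : ∀ j < n, c j = c' j) (hcm : ∀ j, c j ≤ m) (hm : 0 < m)
    (hind : IndepFun (mixture V fun j => if j < n then c j else 0)
      (mixture V fun j => if n ≤ j then c j else 0) P)
    (hind' : IndepFun (mixture V fun j => if j < n then c' j else 0)
      (mixture V fun j => if n ≤ j then c' j else 0) P)
    (hlaw : P.map (mixture V c) = P.map (mixture V c')) :
    mgf (mixture V fun j => if n ≤ j then c j else 0) P
      =ᶠ[𝓝 0] mgf (mixture V fun j => if n ≤ j then c' j else 0) P := by
  have hhead : (fun j => if j < n then c' j else 0) = fun j => if j < n then c j else 0 :=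
    funext fun j => by split_ifs with h; exacts [(hagree j h).symm, rfl]
  rw [hhead] at hind'
  refine mgf_eventuallyEq_of_map_add_eq (hV.measurable_mixture _).aemeasurable
    (hV.measurable_mixture _).aemeasurable (hV.measurable_mixture _).aemeasurable hind hind' ?_
    (hV.eventually_integrable_exp_mul_mixture ht₀ hfin (hc.ite _) (fun j => ?_) hm)
  · rw [← Measure.map_congr (mixture_ae_eq_add hc.ae_summable fun j => not_le.symm), ← hhead,
      ← Measure.map_congr (mixture_ae_eq_add hc'.ae_summable fun j => not_le.symm)]
    exact hlaw
  · split_ifs; exacts [hcm j, hm.le]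

lemma IsIIDSeq.eqOn_mgf_mixture [IsProbabilityMeasure P] (hV : IsIIDSeq V P) {t₀ m : ℝ}
    (ht₀ : 0 < t₀) (hfin : ∀ t : ℝ, |t| < t₀ → Integrable (fun ω => exp (t * V 0 ω)) P)
    {c' : ℕ → ℝ} (hc : IsMixtureCoeff V P c) (hc' : IsMixtureCoeff V P c') (hcm : ∀ j, c j ≤ m)
    (hc'm : ∀ j, c' j ≤ m) (hm : 0 < m)
    (h : mgf (mixture V c) P =ᶠ[𝓝 0] mgf (mixture V c') P) :
    EqOn (mgf (mixture V c) P) (mgf (mixture V c') P) (Ioo (-(t₀ / m)) (t₀ / m)) :=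
  have h0 : 0 < t₀ / m := div_pos ht₀ hm
  (analyticOnNhd_mgf.mono (hV.Ioo_subset_interior_integrableExpSet_mixture hfin hc hcm hm))
    |>.eqOn_of_preconnected_of_eventuallyEq
      (analyticOnNhd_mgf.mono (hV.Ioo_subset_interior_integrableExpSet_mixture hfin hc' hc'm hm))
      isPreconnected_Ioo ⟨neg_lt_zero.2 h0, h0⟩ h

end Mixture

theorem stmt0_general {Ω : Type*} [MeasurableSpace Ω] (P : Measure Ω) [IsProbabilityMeasure P]
    (V : ℕ → Ω → ℝ) (hmeas : ∀ j, Measurable (V j))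
    (hindep : iIndepFun V P)
    (hident : ∀ j, IdentDistrib (V j) (V 0) P P)
    (t₀ : ℝ) (ht₀ : 0 < t₀)
    (hfin : ∀ t : ℝ, |t| < t₀ → Integrable (fun a => Real.exp (t * V 0 a)) P)
    (hdiv : Tendsto (fun t => mgf (V 0) P t) (nhdsWithin t₀ (Set.Iio t₀)) atTop)
    (l l' : ℕ → ℝ)
    (hl0 : ∀ j, 0 ≤ l j) (hl'0 : ∀ j, 0 ≤ l' j)
    (hlmono : Antitone l) (hl'mono : Antitone l')
    (hl2 : Summable fun j => (l j) ^ 2) (hl'2 : Summable fun j => (l' j) ^ 2)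
    (j₀ : ℕ) (hagree : ∀ j < j₀, l j = l' j) (hgt : l' j₀ < l j₀)
    (hL2conv : ∀ᵐ a ∂P, Summable (fun j => l j * V j a))
    (hL2conv' : ∀ᵐ a ∂P, Summable (fun j => l' j * V j a))
    (hsplit : IndepFun (fun a => ∑' j : ℕ, if j < j₀ then l j * V j a else 0)
        (fun a => ∑' j : ℕ, if j₀ ≤ j then l j * V j a else 0) P)
    (hsplit' : IndepFun (fun a => ∑' j : ℕ, if j < j₀ then l' j * V j a else 0)
        (fun a => ∑' j : ℕ, if j₀ ≤ j then l' j * V j a else 0) P) :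
    Measure.map (fun a => ∑' j : ℕ, l j * V j a) P
      ≠ Measure.map (fun a => ∑' j : ℕ, l' j * V j a) P := by
  intro hlaw
  have hV : IsIIDSeq V P := ⟨hmeas, hindep, hident⟩
  have hc : IsMixtureCoeff V P l := ⟨hl0, hl2, hL2conv⟩
  have hc' : IsMixtureCoeff V P l' := ⟨hl'0, hl'2, hL2conv'⟩
  have hlj₀ : 0 < l j₀ := (hl'0 j₀).trans_lt hgt
  have hnear := hV.mgf_tail_eventuallyEq ht₀ hfin hc hc' hagree (fun j => hlmono (Nat.zero_le j))
    (hlj₀.trans_le (hlmono (Nat.zero_le j₀))) (by rwa [mixture_ite, mixture_ite])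
    (by rwa [mixture_ite, mixture_ite]) hlaw
  have heq := hV.eqOn_mgf_mixture ht₀ hfin (hc.ite _) (hc'.ite _) (hlmono.ite_le hlj₀.le)
    (fun j => (hl'mono.ite_le (hl'0 j₀) j).trans hgt.le) hlj₀ hnear
  obtain ⟨B, hB⟩ := hV.exists_mgf_mixture_le hfin (hc'.ite _) (hl'mono.ite_le (hl'0 j₀))
    (τ := t₀ / l j₀) (by positivity) (by rw [div_mul_eq_mul_div, div_lt_iff₀ hlj₀]; nlinarith)
  have hunb := hV.tendsto_mgf_mixture_atTop ht₀ hfin hdiv (hc.ite (j₀ ≤ ·)) (n := j₀)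
    (hlmono.ite_le hlj₀.le) (if_pos le_rfl) hlj₀
  obtain ⟨t, hBt, ht⟩ :=
    ((hunb.eventually_gt_atTop B).and (Ioo_mem_nhdsLT (div_pos ht₀ hlj₀))).exists
  exact (hB t (abs_le.2 ⟨by linarith [ht.1], ht.2.le⟩)).2.not_gt
    (heq ⟨by linarith [ht.1], ht.2⟩ ▸ hBt)

/-- Distinct Sinai–Kesten mixtures: let `(V j)` be i.i.d. with moment generating function
finite exactly on `(-t₀, t₀)` and diverging at `t₀`. If `l, l'` are nonnegative,
nonincreasing ℓ² vectors that agree before `j₀` and satisfy `l'(j₀) < l(j₀)`, and the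
tail series are independent of the common initial parts, then the mixtures
`∑_j l(j) V_j` and `∑_j l'(j) V_j` have different distributions. -/
theorem stmt0 {Ω : Type*} [MeasurableSpace Ω] (P : Measure Ω) [IsProbabilityMeasure P]
    (V : ℕ → Ω → ℝ) (hmeas : ∀ j, Measurable (V j))
    (hindep : iIndepFun V P)
    (hident : ∀ j, IdentDistrib (V j) (V 0) P P)
    (t₀ : ℝ) (ht₀ : 0 < t₀)
    (hfin : ∀ t : ℝ, |t| < t₀ → Integrable (fun a => Real.exp (t * V 0 a)) P)
    (hnotfin : ∀ t : ℝ, t₀ ≤ |t| → ¬ Integrable (fun a => Real.exp (t * V 0 a)) P)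
    (hdiv : Tendsto (fun t => mgf (V 0) P t) (nhdsWithin t₀ (Set.Iio t₀)) atTop)
    (l l' : ℕ → ℝ)
    (hl0 : ∀ j, 0 ≤ l j) (hl'0 : ∀ j, 0 ≤ l' j)
    (hlmono : Antitone l) (hl'mono : Antitone l')
    (hl2 : Summable fun j => (l j) ^ 2) (hl'2 : Summable fun j => (l' j) ^ 2)
    (j₀ : ℕ) (hagree : ∀ j < j₀, l j = l' j) (hgt : l' j₀ < l j₀)
    (hL2conv : ∀ᵐ a ∂P, Summable (fun j => l j * V j a))
    (hL2conv' : ∀ᵐ a ∂P, Summable (fun j => l' j * V j a))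
    (hsplit : IndepFun (fun a => ∑' j : ℕ, if j < j₀ then l j * V j a else 0)
        (fun a => ∑' j : ℕ, if j₀ ≤ j then l j * V j a else 0) P)
    (hsplit' : IndepFun (fun a => ∑' j : ℕ, if j < j₀ then l' j * V j a else 0)
        (fun a => ∑' j : ℕ, if j₀ ≤ j then l' j * V j a else 0) P) :
    Measure.map (fun a => ∑' j : ℕ, l j * V j a) P
      ≠ Measure.map (fun a => ∑' j : ℕ, l' j * V j a) P :=
  stmt0_general P V hmeas hindep hident t₀ ht₀ hfin hdiv l l' hl0 hl'0 hlmono hl'mono hl2 hl'2 j₀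
    hagree hgt hL2conv hL2conv' hsplit hsplit'
end

section
/- Lindeberg swapping tail estimate: let (λ(M))_{M∈ℕ} be nonnegative reals with sup_{M>K} λ(M) ≤ 1/√K and ∑_{M>K} λ(M)² ≤ 1, and let W be a random variable with E[W] = 0, E[W²] = 1, E[W⁴] < ∞. Then for every ε > 0 there is a constant C (depending only on E[W⁴] and ε) such that ∑_{M>K} ( E[λ(M)²W² · 1{λ(M)²W² > ε}] + E[|λ(M)W|³] ) ≤ C/√K. -/
/-!
Each summand is bounded through the fourth moment alone: Markov's inequality gives
`E[λ²W² 1{λ²W² > ε}] ≤ λ⁴ E[W⁴] / ε`, and `|w|³ ≤ 1 + w⁴` gives `E[|λW|³] ≤ λ³ (1 + E[W⁴])`.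
Since `λ ≤ 1/√K ≤ 1`, both `λ⁴` and `λ³` are at most `λ² / √K`, and `∑ λ² ≤ 1` finishes.
-/

open MeasureTheory

lemma indicator_lt_self_le_sq_div {Ω : Type*} {f : Ω → ℝ} {ε : ℝ} (hε : 0 < ε) {a : Ω}
    (hfa : 0 ≤ f a) :
    Set.indicator {a | ε < f a} f a ≤ f a ^ 2 / ε := by
  by_cases h : ε < f a
  · rw [Set.indicator_of_mem (show a ∈ {a | ε < f a} from h), le_div_iff₀ hε]
    nlinarith
  · rw [Set.indicator_of_notMem (show a ∉ {a | ε < f a} from h)]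
    positivity

section Moments

variable {Ω : Type*} [MeasurableSpace Ω]

lemma integral_indicator_lt_self_le {μ : Measure Ω} {f : Ω → ℝ} {ε : ℝ} (hε : 0 < ε)
    (hf : ∀ a, 0 ≤ f a) (hf2 : Integrable (fun a => f a ^ 2) μ) :
    ∫ a, Set.indicator {a | ε < f a} f a ∂μ ≤ (∫ a, f a ^ 2 ∂μ) / ε := by
  rw [← integral_div]
  refine integral_mono_of_nonneg (ae_of_all _ fun a => ?_) (hf2.div_const ε)
    (ae_of_all _ fun a => indicator_lt_self_le_sq_div hε (hf a))
  exact Set.indicator_nonneg (fun a _ => hf a) a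

lemma abs_pow_three_le_one_add_pow_four (x : ℝ) : |x| ^ 3 ≤ 1 + x ^ 4 := by
  have hx4 : x ^ 4 = |x| ^ 4 := by rw [← abs_pow, abs_of_nonneg (by positivity)]
  rw [hx4]
  nlinarith [abs_nonneg x, sq_nonneg (|x| ^ 2 - |x|), sq_nonneg (|x| - 1)]

lemma integral_abs_pow_three_le (μ : Measure Ω) [IsProbabilityMeasure μ] {W : Ω → ℝ}
    (hW4 : Integrable (fun a => W a ^ 4) μ) :
    ∫ a, |W a| ^ 3 ∂μ ≤ 1 + ∫ a, W a ^ 4 ∂μ := by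
  calc ∫ a, |W a| ^ 3 ∂μ ≤ ∫ a, 1 + W a ^ 4 ∂μ :=
        integral_mono_of_nonneg (ae_of_all _ fun a => by positivity)
          ((integrable_const 1).add hW4)
          (ae_of_all _ fun a => abs_pow_three_le_one_add_pow_four (W a))
    _ = 1 + ∫ a, W a ^ 4 ∂μ := by simp [integral_add (integrable_const 1) hW4]

end Moments

section Lindeberg

variable {Ω : Type*} [MeasurableSpace Ω] (P : Measure Ω) (W : Ω → ℝ) (ε : ℝ)

noncomputable def lindebergTerm (c : ℝ) : ℝ :=
  (∫ a, Set.indicator {a | ε < c ^ 2 * W a ^ 2} (fun a => c ^ 2 * W a ^ 2) a ∂P)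
    + ∫ a, |c * W a| ^ 3 ∂P

variable {P W ε}

lemma lindebergTerm_nonneg (c : ℝ) : 0 ≤ lindebergTerm P W ε c :=
  add_nonneg
    (integral_nonneg fun a => Set.indicator_nonneg (fun a _ => by positivity) a)
    (integral_nonneg fun a => by positivity)

lemma lindebergTerm_le [IsProbabilityMeasure P] (hW4 : Integrable (fun a => W a ^ 4) P)
    (hε : 0 < ε) {c : ℝ} (hc : 0 ≤ c) :
    lindebergTerm P W ε c
      ≤ c ^ 4 / ε * ∫ a, W a ^ 4 ∂P + c ^ 3 * (1 + ∫ a, W a ^ 4 ∂P) := by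
  have hsq : (fun a => (c ^ 2 * W a ^ 2) ^ 2) = fun a => c ^ 4 * W a ^ 4 := by
    funext a; ring
  have hcube : (fun a => |c * W a| ^ 3) = fun a => c ^ 3 * |W a| ^ 3 := by
    funext a; rw [abs_mul, mul_pow, abs_of_nonneg hc]
  have htrunc := integral_indicator_lt_self_le (μ := P) hε (fun a => by positivity)
    (hsq ▸ hW4.const_mul (c ^ 4))
  rw [hsq, integral_const_mul, mul_div_right_comm] at htrunc
  unfold lindebergTerm
  rw [hcube, integral_const_mul]
  gcongr
  exact integral_abs_pow_three_le P hW4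

lemma lindebergTerm_le_sq_mul [IsProbabilityMeasure P] (hW4 : Integrable (fun a => W a ^ 4) P)
    (hε : 0 < ε) {c δ : ℝ} (hc : 0 ≤ c) (hcδ : c ≤ δ) (hδ : δ ≤ 1) :
    lindebergTerm P W ε c
      ≤ c ^ 2 * ((∫ a, W a ^ 4 ∂P) / ε + (1 + ∫ a, W a ^ 4 ∂P)) * δ := by
  have h4 : c ^ 4 ≤ c ^ 2 * δ := by nlinarith [mul_nonneg hc hc, mul_nonneg (mul_nonneg hc hc) hc]
  have h3 : c ^ 3 ≤ c ^ 2 * δ := by nlinarith [mul_nonneg hc hc]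
  calc lindebergTerm P W ε c
      ≤ c ^ 4 / ε * ∫ a, W a ^ 4 ∂P + c ^ 3 * (1 + ∫ a, W a ^ 4 ∂P) :=
        lindebergTerm_le hW4 hε hc
    _ ≤ c ^ 2 * δ / ε * ∫ a, W a ^ 4 ∂P + c ^ 2 * δ * (1 + ∫ a, W a ^ 4 ∂P) := by gcongr
    _ = _ := by ring

end Lindeberg

lemma tsum_le_of_le_mul_of_tsum_le_one {f g : ℕ → ℝ} {a : ℝ} (hf : ∀ n, 0 ≤ f n)
    (hfg : ∀ n, f n ≤ g n * a) (hg : Summable g) (hg1 : ∑' n, g n ≤ 1) (ha : 0 ≤ a) :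
    ∑' n, f n ≤ a := by
  have hga : Summable fun n => g n * a := hg.mul_right a
  calc ∑' n, f n ≤ ∑' n, g n * a :=
        (hga.of_nonneg_of_le hf hfg).tsum_le_tsum hfg hga
    _ = (∑' n, g n) * a := tsum_mul_right
    _ ≤ a := mul_le_of_le_one_left ha hg1

theorem stmt19_general {Ω : Type*} [MeasurableSpace Ω] (P : Measure Ω) [IsProbabilityMeasure P]
    (W : Ω → ℝ)
    (hW4 : Integrable (fun a => (W a) ^ 4) P) :
    ∀ ε : ℝ, 0 < ε → ∃ C > (0 : ℝ), ∀ K : ℕ, 1 ≤ K → ∀ l : ℕ → ℝ,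
      (∀ M, 0 ≤ l M) →
      (∀ M : ℕ, K < M → l M ≤ 1 / Real.sqrt K) →
      (∑' M : ℕ, (if K < M then (l M) ^ 2 else 0)) ≤ 1 →
      Summable (fun M : ℕ => if K < M then (l M) ^ 2 else 0) →
      (∑' M : ℕ, if K < M then
          ((∫ a, Set.indicator {a | ε < (l M) ^ 2 * (W a) ^ 2}
              (fun a => (l M) ^ 2 * (W a) ^ 2) a ∂P)
            + ∫ a, |l M * W a| ^ 3 ∂P)
        else 0)
        ≤ C / Real.sqrt K := by
  intro ε hε
  refine ⟨(∫ a, W a ^ 4 ∂P) / ε + (1 + ∫ a, W a ^ 4 ∂P), by positivity, ?_⟩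
  intro K hK l hl0 hlK hsum hsumm
  have hδ : 1 / Real.sqrt K ≤ 1 := by
    rw [div_le_one (by positivity)]
    exact Real.one_le_sqrt.mpr (by exact_mod_cast hK)
  rw [div_eq_mul_one_div]
  refine tsum_le_of_le_mul_of_tsum_le_one (fun M => ?_) (fun M => ?_) hsumm hsum (by positivity)
  · split_ifs
    exacts [lindebergTerm_nonneg (l M), le_rfl]
  · split_ifs with hM
    · rw [← mul_assoc]
      exact lindebergTerm_le_sq_mul hW4 hε (hl0 M) (hlK M hM) hδ
    · simp

/-- Lindeberg-swapping tail estimate: if `W` has mean `0`, variance `1` and finite fourth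
moment, then for every `ε > 0` there is a constant `C > 0` such that for all `K ≥ 1` and
all nonnegative weights `λ` with `λ(M) ≤ 1/√K` for `M > K` and `∑_{M>K} λ(M)² ≤ 1`,
`∑_{M>K} ( E[λ(M)²W² 1{λ(M)²W² > ε}] + E[|λ(M)W|³] ) ≤ C/√K`. -/
theorem stmt19 {Ω : Type*} [MeasurableSpace Ω] (P : Measure Ω) [IsProbabilityMeasure P]
    (W : Ω → ℝ) (hWmeas : Measurable W)
    (hW4 : Integrable (fun a => (W a) ^ 4) P)
    (hWmean : ∫ a, W a ∂P = 0) (hWvar : ∫ a, (W a) ^ 2 ∂P = 1) :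
    ∀ ε : ℝ, 0 < ε → ∃ C > (0 : ℝ), ∀ K : ℕ, 1 ≤ K → ∀ l : ℕ → ℝ,
      (∀ M, 0 ≤ l M) →
      (∀ M : ℕ, K < M → l M ≤ 1 / Real.sqrt K) →
      (∑' M : ℕ, (if K < M then (l M) ^ 2 else 0)) ≤ 1 →
      Summable (fun M : ℕ => if K < M then (l M) ^ 2 else 0) →
      (∑' M : ℕ, if K < M then
          ((∫ a, Set.indicator {a | ε < (l M) ^ 2 * (W a) ^ 2}
              (fun a => (l M) ^ 2 * (W a) ^ 2) a ∂P)
            + ∫ a, |l M * W a| ^ 3 ∂P)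
        else 0)
        ≤ C / Real.sqrt K :=
  stmt19_general P W hW4
end
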